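/- Let P be the probability measure on {−1,0,1}³ that assigns probability 1/6 to each of the six triples (−1,0,1), (1,−1,0), (0,1,−1), (1,0,−1), (−1,1,0), (0,−1,1) and probability 0 to all other triples, and let X, Y, Z be the coordinate random variables. Then E[X] = E[Y] = E[Z] = 0, Var(X) = Var(Y) = Var(Z) = 2/3, Cov(X,Y) = Cov(Y,Z) = Cov(X,Z) = −1/3, and hence ρ(X,Y) = ρ(Y,Z) = ρ(X,Z) = −1/2, so that ρ(X,Y) + ρ(Y,Z) + ρ(X,Z) = −3/2 < −1. Consequently, for three-valued random variables with zero means, the inequality −1 ≤ ρ(X,Y) + ρ(Y,Z) + ρ(X,Z) is not necessary for the existence of a joint probability distribution. -/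

import Mathlib

open scoped Classical

/-! The distribution is uniform on the six permutations of `(-1, 0, 1)`, so every moment is an
average over these six points. Each coordinate takes each of the values `-1, 0, 1` on two of
them, giving mean `0` and second moment `2/3`; the product of two distinct coordinates is `-1`
on two of them and `0` on the other four, giving `E[XY] = -1/3`. -/

/-- The sample space `{-1,0,1}³` with coordinates `X, Y, Z`. -/
abbrev TernTriple : Type :=
  ({-1, 0, 1} : Finset ℝ) × ({-1, 0, 1} : Finset ℝ) × ({-1, 0, 1} : Finset ℝ)

theorem Fintype.sum_mul_comp_eq_mul_sum_of_eq_ite {α β R : Type*} [Fintype α] [DecidableEq β]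
    [NonUnitalNonAssocSemiring R] {e : α → β} (he : Function.Injective e) {S : Finset β}
    (hS : (S : Set β) ⊆ Set.range e) {p : α → R} {c : R}
    (hp : ∀ a, p a = if e a ∈ (S : Set β) then c else 0) (g : β → R) :
    ∑ a, p a * g (e a) = c * ∑ b ∈ S, g b := by
  have hfilter : (Finset.univ.filter fun a => e a ∈ (S : Set β)) = S.preimage e he.injOn := by
    ext; simp
  rw [Finset.mul_sum, ← Finset.sum_preimage e S he.injOn _ fun b hb hb' => absurd (hS hb) hb',
    ← hfilter, Finset.sum_filter]
  simp only [hp, ite_mul, zero_mul]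

def TernTriple.val : TernTriple → ℝ × ℝ × ℝ :=
  Prod.map Subtype.val (Prod.map Subtype.val Subtype.val)

theorem TernTriple.val_injective : Function.Injective TernTriple.val :=
  Subtype.val_injective.prodMap (Subtype.val_injective.prodMap Subtype.val_injective)

noncomputable def permTriples : Finset (ℝ × ℝ × ℝ) :=
  {(-1, 0, 1), (1, -1, 0), (0, 1, -1), (1, 0, -1), (-1, 1, 0), (0, -1, 1)}

theorem sum_permTriples {M : Type*} [AddCommMonoid M] (g : ℝ × ℝ × ℝ → M) :
    ∑ t ∈ permTriples, g t = g (-1, 0, 1) + (g (1, -1, 0) + (g (0, 1, -1) + (g (1, 0, -1) +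
      (g (-1, 1, 0) + g (0, -1, 1))))) := by
  norm_num [permTriples, Finset.sum_insert, Prod.ext_iff]

theorem permTriples_subset_range_val :
    (permTriples : Set (ℝ × ℝ × ℝ)) ⊆ Set.range TernTriple.val := by
  simp [permTriples, Set.insert_subset_iff, TernTriple.val, Set.range_prodMap]

theorem three_valued_correlation_counterexample
    (p : TernTriple → ℝ)
    (hp : ∀ s : TernTriple, p s =
      if ((s.1 : ℝ), (s.2.1 : ℝ), (s.2.2 : ℝ)) ∈
          ({(-1, 0, 1), (1, -1, 0), (0, 1, -1), (1, 0, -1), (-1, 1, 0), (0, -1, 1)} :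
            Set (ℝ × ℝ × ℝ))
        then 1/6 else 0) :
    (∀ s, 0 ≤ p s) ∧ (∑ s, p s = 1) ∧
    -- zero means
    (∑ s, p s * (s.1 : ℝ)) = 0 ∧
    (∑ s, p s * (s.2.1 : ℝ)) = 0 ∧
    (∑ s, p s * (s.2.2 : ℝ)) = 0 ∧
    -- variances 2/3
    (∑ s, p s * (s.1 : ℝ) ^ 2) - (∑ s, p s * (s.1 : ℝ)) ^ 2 = 2/3 ∧
    (∑ s, p s * (s.2.1 : ℝ) ^ 2) - (∑ s, p s * (s.2.1 : ℝ)) ^ 2 = 2/3 ∧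
    (∑ s, p s * (s.2.2 : ℝ) ^ 2) - (∑ s, p s * (s.2.2 : ℝ)) ^ 2 = 2/3 ∧
    -- covariances -1/3
    (∑ s, p s * ((s.1 : ℝ) * (s.2.1 : ℝ))) -
      (∑ s, p s * (s.1 : ℝ)) * (∑ s, p s * (s.2.1 : ℝ)) = -1/3 ∧
    (∑ s, p s * ((s.2.1 : ℝ) * (s.2.2 : ℝ))) -
      (∑ s, p s * (s.2.1 : ℝ)) * (∑ s, p s * (s.2.2 : ℝ)) = -1/3 ∧
    (∑ s, p s * ((s.1 : ℝ) * (s.2.2 : ℝ))) -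
      (∑ s, p s * (s.1 : ℝ)) * (∑ s, p s * (s.2.2 : ℝ)) = -1/3 ∧
    -- correlations -1/2
    (-1/3 : ℝ) / (Real.sqrt (2/3) * Real.sqrt (2/3)) = -1/2 ∧
    -- the sum of the correlations is -3/2 < -1
    (-1/2 : ℝ) + (-1/2) + (-1/2) = -3/2 ∧ (-3/2 : ℝ) < -1 := by
  have hp_perm (s : TernTriple) :
      p s = if s.val ∈ (permTriples : Set (ℝ × ℝ × ℝ)) then 1/6 else 0 := by
    convert hp s using 2
    simp [permTriples, TernTriple.val, Prod.ext_iff]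
  have E (g : ℝ → ℝ → ℝ → ℝ) : ∑ s : TernTriple, p s * g s.1 s.2.1 s.2.2 =
      1/6 * (g (-1) 0 1 + (g 1 (-1) 0 + (g 0 1 (-1) + (g 1 0 (-1) + (g (-1) 1 0 + g 0 (-1) 1))))) :=
    (Fintype.sum_mul_comp_eq_mul_sum_of_eq_ite TernTriple.val_injective
      permTriples_subset_range_val hp_perm fun t => g t.1 t.2.1 t.2.2).trans
      (by rw [sum_permTriples])
  have mass : ∑ s, p s = 1 := by
    simpa using (E fun _ _ _ => 1).trans (by norm_num : _ = (1 : ℝ))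
  have meanX : ∑ s, p s * (s.1 : ℝ) = 0 := by rw [E fun x _ _ => x]; norm_num
  have meanY : ∑ s, p s * (s.2.1 : ℝ) = 0 := by rw [E fun _ y _ => y]; norm_num
  have meanZ : ∑ s, p s * (s.2.2 : ℝ) = 0 := by rw [E fun _ _ z => z]; norm_num
  refine ⟨fun s => ?_, mass, meanX, meanY, meanZ, ?_, ?_, ?_, ?_, ?_, ?_, ?_, by norm_num,
    by norm_num⟩
  · rw [hp s]; split_ifs <;> norm_num
  · rw [meanX, E fun x _ _ => x ^ 2]; norm_num
  · rw [meanY, E fun _ y _ => y ^ 2]; norm_num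
  · rw [meanZ, E fun _ _ z => z ^ 2]; norm_num
  · rw [meanX, meanY, E fun x y _ => x * y]; norm_num
  · rw [meanY, meanZ, E fun _ y z => y * z]; norm_num
  · rw [meanX, meanZ, E fun x _ z => x * z]; norm_num
  · rw [Real.mul_self_sqrt (by norm_num)]; norm_num
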